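/- For every k ≥ 1, the reconfiguration distance in G^k between the shortest (s,t)-paths p^k_b and p^k_e is at most 11(2^k − 1); that is, there is a reconfiguration sequence from p^k_b to p^k_e of length at most 11(2^k − 1). -/

import Mathlib

/-- Vertices of the graph `G^k`: `s`, `t`, vertices `x^{ℓ+1}_{i+1}` (for `ℓ : Fin k`, `i : Fin 7`)
and `y^{ℓ+1}_{i+1}` (for `ℓ : Fin k`, `i : Fin 6`).  A value `ℓ : Fin k` encodes level `ℓ+1`,
and an index `i : Fin 7` (resp. `Fin 6`) encodes the subscript `i+1`. -/
inductive GVert (k : ℕ) : Type where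
  | s : GVert k
  | t : GVert k
  | x (ℓ : Fin k) (i : Fin 7) : GVert k
  | y (ℓ : Fin k) (i : Fin 6) : GVert k
deriving DecidableEq, Fintype

/-- The (oriented) edge relation generating the graph `G^k`. -/
def gkRel (k : ℕ) : GVert k → GVert k → Prop
  | GVert.s, GVert.x ℓ _ => (ℓ : ℕ) = k - 1
  | GVert.x ℓ i, GVert.y ℓ' i' => ℓ = ℓ' ∧ ((i : ℕ) = (i' : ℕ) ∨ (i : ℕ) = (i' : ℕ) + 1)
  | GVert.y ℓ i, GVert.x ℓ' j => (ℓ : ℕ) = (ℓ' : ℕ) + 1 ∧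
      (((i : ℕ) = 0 ∨ (i : ℕ) = 2 ∨ (i : ℕ) = 4) ∨
        ((i : ℕ) = 1 ∧ (j : ℕ) = 0) ∨ ((i : ℕ) = 3 ∧ (j : ℕ) = 6) ∨
        ((i : ℕ) = 5 ∧ (j : ℕ) = 0))
  | GVert.y ℓ _, GVert.t => (ℓ : ℕ) = 0
  | _, _ => False

/-- The graph `G^k`. -/
def Gk (k : ℕ) : SimpleGraph (GVert k) := SimpleGraph.fromRel (gkRel k)

/-- `p` is a shortest `(s,t)`-path in `H`, recorded as the sequence of its `L+1` vertices;
its length `L` is required to equal the distance between `s` and `t`. -/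
def IsShortestSTPath {V : Type*} (H : SimpleGraph V) (s t : V) (L : ℕ)
    (p : Fin (L + 1) → V) : Prop :=
  p 0 = s ∧ p (Fin.last L) = t ∧ (∀ i : Fin L, H.Adj (p i.castSucc) (p i.succ)) ∧
    L = H.dist s t

/-- Two vertex sequences differ in exactly one position. -/
def DiffOne {N : ℕ} {α : Type*} (p q : Fin N → α) : Prop :=
  ∃ i, p i ≠ q i ∧ ∀ j, j ≠ i → p j = q j

/-- `ρ 0, ρ 1, …, ρ ℓ` is a reconfiguration sequence of length `ℓ` from the shortest
`(s,t)`-path `p` to the shortest `(s,t)`-path `q`: all its members are shortest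
`(s,t)`-paths and consecutive members differ in exactly one position. -/
def SPReconfSeq {V : Type*} (H : SimpleGraph V) (s t : V) (L : ℕ)
    (ρ : ℕ → (Fin (L + 1) → V)) (ℓ : ℕ) (p q : Fin (L + 1) → V) : Prop :=
  ρ 0 = p ∧ ρ ℓ = q ∧ (∀ i ≤ ℓ, IsShortestSTPath H s t L (ρ i)) ∧
    ∀ i < ℓ, DiffOne (ρ i) (ρ (i + 1))

/-- The path `p^k_b = s, x^k_1, y^k_1, x^{k-1}_1, y^{k-1}_1, …, x^1_1, y^1_1, t`. -/
def pbG (k : ℕ) : Fin (2 * k + 1 + 1) → GVert k := fun d =>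
  if h0 : (d : ℕ) = 0 then GVert.s
  else if h1 : (d : ℕ) ≤ 2 * k then
    if (d : ℕ) % 2 = 1 then GVert.x ⟨k - 1 - ((d : ℕ) - 1) / 2, by omega⟩ ⟨0, by omega⟩
    else GVert.y ⟨k - 1 - ((d : ℕ) - 1) / 2, by omega⟩ ⟨0, by omega⟩
  else GVert.t

/-- The path `p^k_e = s, x^k_7, y^k_6, x^{k-1}_1, y^{k-1}_1, …, x^1_1, y^1_1, t`. -/
def peG (k : ℕ) (hk : 1 ≤ k) : Fin (2 * k + 1 + 1) → GVert k := fun d =>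
  if (d : ℕ) = 1 then GVert.x ⟨k - 1, by omega⟩ ⟨6, by omega⟩
  else if (d : ℕ) = 2 then GVert.y ⟨k - 1, by omega⟩ ⟨5, by omega⟩
  else pbG k d

/-!
A shortest `(s,t)`-path of `G^k` chooses on every level a pair `x_a y_b` with `a ∈ {b, b+1}`,
subject to the links between `y` on one level and `x` on the level below. One level moves from
`x_1 y_1` to `x_7 y_6` along the eleven single-vertex changes
`x_1 y_1, x_2 y_1, x_2 y_2, …, x_7 y_6`.
Passing through `y_2` and `y_6` needs the level below at `x_1`, passing through `y_4` needs it at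
`x_7`, and `y_1, y_3, y_5` are joined to every `x` below. So while the upper level rests at
`x_4 y_3` the level below is moved (recursively) from `x_1 y_1` to `x_7 y_6`, and while it rests at
`x_6 y_5` the level below is moved back. The lengths satisfy `T(1) = 11`, `T(ℓ+1) = 11 + 2 T(ℓ)`,
so `T(k) = 11 (2^k - 1)`.
-/

namespace SimpleGraph

variable {V : Type*} {G : SimpleGraph V}

theorem edist_le_of_chain {L : ℕ} {p : Fin (L + 1) → V}
    (hp : ∀ i : Fin L, G.Adj (p i.castSucc) (p i.succ)) (i : Fin (L + 1)) :
    G.edist (p 0) (p i) ≤ i := by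
  induction i using Fin.induction with
  | zero => simp
  | succ i ih =>
    calc G.edist (p 0) (p i.succ)
        ≤ G.edist (p 0) (p i.castSucc) + G.edist (p i.castSucc) (p i.succ) := G.edist_triangle
      _ ≤ i + 1 := add_le_add (by simpa using ih) (edist_eq_one_iff_adj.mpr (hp i)).le
      _ = (i.succ : ℕ) := by simp

theorem Walk.le_add_length_of_potential {f : V → ℕ} (hf : ∀ a b, G.Adj a b → f a ≤ f b + 1)
    {u v : V} (w : G.Walk u v) : f u ≤ f v + w.length := by
  induction w with
  | nil => simp
  | cons h _ ih => have := hf _ _ h; simp only [Walk.length_cons]; omega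

theorem dist_eq_of_chain_of_potential {L : ℕ} {p : Fin (L + 1) → V}
    (hp : ∀ i : Fin L, G.Adj (p i.castSucc) (p i.succ)) {f : V → ℕ}
    (hf : ∀ a b, G.Adj a b → f a ≤ f b + 1) (hfp : f (p 0) = f (p (Fin.last L)) + L) :
    G.dist (p 0) (p (Fin.last L)) = L := by
  have hle : G.edist (p 0) (p (Fin.last L)) ≤ L := by
    simpa using edist_le_of_chain hp (Fin.last L)
  obtain ⟨w, hw⟩ := exists_walk_of_edist_ne_top (ne_top_of_le_ne_top (by simp) hle)
  have hge := w.le_add_length_of_potential hf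
  rw [← hw] at hle
  rw [dist, ← hw, ENat.toNat_natCast]
  exact le_antisymm (by exact_mod_cast hle) (by omega)

end SimpleGraph

theorem DiffOne.symm {N : ℕ} {α : Type*} {p q : Fin N → α} (h : DiffOne p q) : DiffOne q p :=
  let ⟨i, hi, hj⟩ := h
  ⟨i, Ne.symm hi, fun j hji => (hj j hji).symm⟩

section Reconfiguration

variable {V : Type*} {H : SimpleGraph V} {s t : V} {L : ℕ}

def ReconfIn (H : SimpleGraph V) (s t : V) (L n : ℕ) (p q : Fin (L + 1) → V) : Prop :=
  ∃ ρ : ℕ → (Fin (L + 1) → V), SPReconfSeq H s t L ρ n p q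

namespace ReconfIn

theorem refl {p : Fin (L + 1) → V} (hp : IsShortestSTPath H s t L p) : ReconfIn H s t L 0 p p :=
  ⟨fun _ => p, rfl, rfl, fun _ _ => hp, fun _ hi => absurd hi (Nat.not_lt_zero _)⟩

theorem single {p q : Fin (L + 1) → V} (hp : IsShortestSTPath H s t L p)
    (hq : IsShortestSTPath H s t L q) (hpq : DiffOne p q) : ReconfIn H s t L 1 p q := by
  refine ⟨fun i => if i = 0 then p else q, by simp, by simp, ?_, ?_⟩
  · intro i _
    dsimp only
    split_ifs
    exacts [hp, hq]
  · intro i hi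
    obtain rfl : i = 0 := by omega
    simpa using hpq

theorem trans {p q r : Fin (L + 1) → V} {n m : ℕ} (hpq : ReconfIn H s t L n p q)
    (hqr : ReconfIn H s t L m q r) : ReconfIn H s t L (n + m) p r := by
  obtain ⟨ρ, hρ0, hρn, hρ, hρd⟩ := hpq
  obtain ⟨σ, hσ0, hσm, hσ, hσd⟩ := hqr
  have glue : ∀ i, (if i ≤ n then ρ i else σ (i - n)) = σ (i - n) ∨ i < n := by
    intro i
    by_cases hin : i ≤ n
    · rcases hin.lt_or_eq with hin | rfl
      · exact .inr hin
      · simp [hρn, hσ0]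
    · simp [hin]
  refine ⟨fun i => if i ≤ n then ρ i else σ (i - n), by simpa using hρ0, ?_, ?_, ?_⟩
  · rcases glue (n + m) with h | h
    · dsimp only
      rw [h, Nat.add_sub_cancel_left]
      exact hσm
    · omega
  · intro i hi
    rcases glue i with h | h
    · simp only [h]
      exact hσ _ (by omega)
    · simp only [if_pos h.le]
      exact hρ i h.le
  · intro i hi
    by_cases hin : i < n
    · simp only [if_pos hin.le, if_pos (Nat.succ_le_of_lt hin)]
      exact hρd i hin
    · rcases glue i with h | h
      · simp only [h, if_neg (show ¬i + 1 ≤ n by omega), show i + 1 - n = i - n + 1 by omega]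
        exact hσd _ (by omega)
      · omega

theorem symm {p q : Fin (L + 1) → V} {n : ℕ} (h : ReconfIn H s t L n p q) :
    ReconfIn H s t L n q p := by
  obtain ⟨ρ, hρ0, hρn, hρ, hρd⟩ := h
  refine ⟨fun i => ρ (n - i), by simpa using hρn, by simpa using hρ0,
    fun i _ => hρ (n - i) (by omega), fun i hi => ?_⟩
  dsimp only
  rw [show n - i = n - (i + 1) + 1 by omega]
  exact (hρd _ (by omega)).symm

end ReconfIn

end Reconfiguration

namespace GVert

variable {k : ℕ}

def height : GVert k → ℕ
  | s => 2 * k + 1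
  | t => 0
  | x ℓ _ => 2 * (ℓ : ℕ) + 2
  | y ℓ _ => 2 * (ℓ : ℕ) + 1

theorem height_eq_of_gkRel {u v : GVert k} (h : gkRel k u v) : u.height = v.height + 1 := by
  cases u <;> cases v <;> simp only [gkRel] at h <;> simp only [height]
  · rename_i ℓ _; have := ℓ.isLt; omega
  · rw [h.1]
  · omega
  · omega

theorem height_le_of_adj {u v : GVert k} (h : (Gk k).Adj u v) : u.height ≤ v.height + 1 := by
  rw [Gk, SimpleGraph.fromRel_adj] at h
  rcases h.2 with h | h <;> have := height_eq_of_gkRel h <;> omega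

end GVert

theorem Gk_adj_of_gkRel {k : ℕ} {u v : GVert k} (hne : u ≠ v) (h : gkRel k u v) :
    (Gk k).Adj u v := by
  rw [Gk, SimpleGraph.fromRel_adj]
  exact ⟨hne, .inl h⟩

/-- `y^{ℓ+1}_{i+1}` is adjacent to `x^ℓ_{j+1}`. -/
def Linked (i j : ℕ) : Prop :=
  i = 0 ∨ i = 2 ∨ i = 4 ∨ (i = 1 ∧ j = 0) ∨ (i = 3 ∧ j = 6) ∨ (i = 5 ∧ j = 0)

/-- A state `c` of `G^k` chooses the vertices `x^{ℓ+1}_{(c ℓ).1 + 1}` and `y^{ℓ+1}_{(c ℓ).2 + 1}`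
on every level `ℓ < k` such that together with `s` and `t` they form an `(s,t)`-path. -/
def IsState (k : ℕ) (c : ℕ → ℕ × ℕ) : Prop :=
  ∀ ℓ < k, (c ℓ).1 ≤ 6 ∧ (c ℓ).2 ≤ 5 ∧ ((c ℓ).1 = (c ℓ).2 ∨ (c ℓ).1 = (c ℓ).2 + 1) ∧
    (ℓ + 1 < k → Linked (c (ℓ + 1)).2 (c ℓ).1)

/-- The vertex sequence of a state; level `ℓ` occupies positions `2(k-1-ℓ)+1` and `2(k-1-ℓ)+2`.
The reductions `% 7` and `% 6` only make the indices total; on states they do nothing. -/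
def statePath (k : ℕ) (c : ℕ → ℕ × ℕ) : Fin (2 * k + 1 + 1) → GVert k := fun d =>
  if h0 : (d : ℕ) = 0 then GVert.s
  else if h1 : (d : ℕ) ≤ 2 * k then
    if (d : ℕ) % 2 = 1 then
      GVert.x ⟨k - 1 - ((d : ℕ) - 1) / 2, by omega⟩
        ⟨(c (k - 1 - ((d : ℕ) - 1) / 2)).1 % 7, by omega⟩
    else GVert.y ⟨k - 1 - ((d : ℕ) - 1) / 2, by omega⟩
        ⟨(c (k - 1 - ((d : ℕ) - 1) / 2)).2 % 6, by omega⟩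
  else GVert.t

section statePath

variable {k : ℕ} {c c' : ℕ → ℕ × ℕ} {d : Fin (2 * k + 1 + 1)}

theorem position_cases (n : ℕ) (hn : n ≤ 2 * k + 1) :
    n = 0 ∨ n = 2 * k + 1 ∨ ∃ ℓ < k, n = 2 * (k - 1 - ℓ) + 1 ∨ n = 2 * (k - 1 - ℓ) + 2 := by
  by_cases h : n = 0 ∨ n = 2 * k + 1
  · tauto
  · exact .inr (.inr ⟨k - 1 - (n - 1) / 2, by omega, by omega⟩)

theorem statePath_of_eq_zero (h : (d : ℕ) = 0) : statePath k c d = GVert.s := by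
  simp [statePath, h]

theorem statePath_of_eq_last (h : (d : ℕ) = 2 * k + 1) : statePath k c d = GVert.t := by
  simp only [statePath]
  rw [dif_neg (by omega), dif_neg (by omega)]

theorem statePath_of_eq_x {ℓ : ℕ} (hℓ : ℓ < k) (h : (d : ℕ) = 2 * (k - 1 - ℓ) + 1) :
    statePath k c d = GVert.x ⟨ℓ, hℓ⟩ ⟨(c ℓ).1 % 7, by omega⟩ := by
  have e : k - 1 - ((d : ℕ) - 1) / 2 = ℓ := by omega
  simp only [statePath, e]
  rw [dif_neg (by omega), dif_pos (by omega), if_pos (by omega)]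

theorem statePath_of_eq_y {ℓ : ℕ} (hℓ : ℓ < k) (h : (d : ℕ) = 2 * (k - 1 - ℓ) + 2) :
    statePath k c d = GVert.y ⟨ℓ, hℓ⟩ ⟨(c ℓ).2 % 6, by omega⟩ := by
  have e : k - 1 - ((d : ℕ) - 1) / 2 = ℓ := by omega
  simp only [statePath, e]
  rw [dif_neg (by omega), dif_pos (by omega), if_neg (by omega)]

theorem statePath_congr (hx : ∀ ℓ < k, (d : ℕ) = 2 * (k - 1 - ℓ) + 1 → (c ℓ).1 = (c' ℓ).1)
    (hy : ∀ ℓ < k, (d : ℕ) = 2 * (k - 1 - ℓ) + 2 → (c ℓ).2 = (c' ℓ).2) :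
    statePath k c d = statePath k c' d := by
  rcases position_cases (k := k) d (by omega) with h | h | ⟨ℓ, hℓ, h | h⟩
  · rw [statePath_of_eq_zero h, statePath_of_eq_zero h]
  · rw [statePath_of_eq_last h, statePath_of_eq_last h]
  · rw [statePath_of_eq_x hℓ h, statePath_of_eq_x hℓ h]
    simp [hx ℓ hℓ h]
  · rw [statePath_of_eq_y hℓ h, statePath_of_eq_y hℓ h]
    simp [hy ℓ hℓ h]

theorem statePath_adj (hk : 1 ≤ k) (hc : IsState k c) (i : Fin (2 * k + 1)) :
    (Gk k).Adj (statePath k c i.castSucc) (statePath k c i.succ) := by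
  have hi : (i.succ : ℕ) = i + 1 := rfl
  rcases position_cases (k := k) i (by omega) with h | h | ⟨ℓ, hℓ, h | h⟩
  · rw [statePath_of_eq_zero h, statePath_of_eq_x (ℓ := k - 1) (by omega) (by omega)]
    exact Gk_adj_of_gkRel (by simp) (by simp [gkRel])
  · omega
  · rw [statePath_of_eq_x hℓ h, statePath_of_eq_y hℓ (by omega)]
    obtain ⟨h1, h2, h3, -⟩ := hc ℓ hℓ
    refine Gk_adj_of_gkRel (by simp) ⟨rfl, ?_⟩
    simp only [Nat.mod_eq_of_lt (by omega : (c ℓ).1 < 7), Nat.mod_eq_of_lt (by omega : (c ℓ).2 < 6)]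
    exact h3
  · rw [statePath_of_eq_y hℓ h]
    by_cases hℓ0 : ℓ = 0
    · subst hℓ0
      rw [statePath_of_eq_last (by omega)]
      exact Gk_adj_of_gkRel (by simp) (by simp [gkRel])
    · rw [statePath_of_eq_x (ℓ := ℓ - 1) (by omega) (by omega)]
      obtain ⟨-, h2, -, -⟩ := hc ℓ hℓ
      obtain ⟨h1, -, -, h4⟩ := hc (ℓ - 1) (by omega)
      have hlink := h4 (by omega)
      rw [show ℓ - 1 + 1 = ℓ by omega] at hlink
      refine Gk_adj_of_gkRel (by simp) ⟨by simp only; omega, ?_⟩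
      simp only [Nat.mod_eq_of_lt (by omega : (c (ℓ - 1)).1 < 7),
        Nat.mod_eq_of_lt (by omega : (c ℓ).2 < 6)]
      unfold Linked at hlink
      omega

theorem isShortestSTPath_statePath (hk : 1 ≤ k) (hc : IsState k c) :
    IsShortestSTPath (Gk k) GVert.s GVert.t (2 * k + 1) (statePath k c) := by
  have hs : statePath k c 0 = GVert.s := statePath_of_eq_zero rfl
  have ht : statePath k c (Fin.last _) = GVert.t := statePath_of_eq_last rfl
  refine ⟨hs, ht, statePath_adj hk hc, ?_⟩
  have := SimpleGraph.dist_eq_of_chain_of_potential (statePath_adj hk hc)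
    (fun _ _ => GVert.height_le_of_adj) (by rw [hs, ht]; simp [GVert.height])
  rw [← hs, ← ht, this]

end statePath

theorem pbG_eq_statePath (k : ℕ) : pbG k = statePath k (fun _ => (0, 0)) := by
  funext d
  simp only [pbG, statePath]

theorem peG_eq_statePath (k : ℕ) (hk : 1 ≤ k) :
    peG k hk = statePath k (Function.update (fun _ => (0, 0)) (k - 1) (6, 5)) := by
  funext d
  by_cases h1 : (d : ℕ) = 1
  · rw [statePath_of_eq_x (ℓ := k - 1) (by omega) (by omega)]
    simp [peG, h1]
  by_cases h2 : (d : ℕ) = 2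
  · rw [statePath_of_eq_y (ℓ := k - 1) (by omega) (by omega)]
    simp [peG, h2]
  rw [show peG k hk d = pbG k d by simp [peG, h1, h2], pbG_eq_statePath]
  apply statePath_congr <;>
  · intro ℓ _ hd
    rw [Function.update_of_ne (by omega)]

section Moves

variable {k : ℕ} {c : ℕ → ℕ × ℕ} {ℓ : ℕ}

theorem IsState.update (hc : IsState k c) {v : ℕ × ℕ}
    (hv : v.1 ≤ 6 ∧ v.2 ≤ 5 ∧ (v.1 = v.2 ∨ v.1 = v.2 + 1))
    (hup : ℓ + 1 < k → Linked (c (ℓ + 1)).2 v.1) (hdown : 0 < ℓ → Linked v.2 (c (ℓ - 1)).1) :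
    IsState k (Function.update c ℓ v) := by
  intro m hm
  by_cases hmℓ : m = ℓ
  · subst hmℓ
    rw [Function.update_self, Function.update_of_ne (by omega)]
    exact ⟨hv.1, hv.2.1, hv.2.2, hup⟩
  rw [Function.update_of_ne hmℓ]
  by_cases hmℓ' : m + 1 = ℓ
  · subst hmℓ'
    rw [Function.update_self]
    exact ⟨(hc m hm).1, (hc m hm).2.1, (hc m hm).2.2.1, fun _ => hdown (by omega)⟩
  · rw [Function.update_of_ne hmℓ']
    exact hc m hm

theorem diffOne_statePath_update (hc : IsState k c) (hℓ : ℓ < k) {v : ℕ × ℕ}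
    (hv : v.1 ≤ 6 ∧ v.2 ≤ 5)
    (hmove : (v.1 ≠ (c ℓ).1 ∧ v.2 = (c ℓ).2) ∨ (v.1 = (c ℓ).1 ∧ v.2 ≠ (c ℓ).2)) :
    DiffOne (statePath k c) (statePath k (Function.update c ℓ v)) := by
  obtain ⟨hx, hy, -, -⟩ := hc ℓ hℓ
  have off_level : ∀ ℓ', ℓ' ≠ ℓ → c ℓ' = Function.update c ℓ v ℓ' :=
    fun ℓ' h => (Function.update_of_ne h v c).symm
  rcases hmove with ⟨hne, heq⟩ | ⟨heq, hne⟩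
  · refine ⟨⟨2 * (k - 1 - ℓ) + 1, by omega⟩, ?_, fun d hd => statePath_congr ?_ ?_⟩
    · rw [statePath_of_eq_x hℓ rfl, statePath_of_eq_x hℓ rfl]
      simp only [ne_eq, GVert.x.injEq, Fin.mk.injEq, true_and, Function.update_self]
      omega
    · intro ℓ' _ hd'
      rw [off_level ℓ' (fun h => hd (Fin.ext (by simp only; omega)))]
    · intro ℓ' _ _
      by_cases h : ℓ' = ℓ
      · rw [h, Function.update_self, heq]
      · rw [off_level ℓ' h]
  · refine ⟨⟨2 * (k - 1 - ℓ) + 2, by omega⟩, ?_, fun d hd => statePath_congr ?_ ?_⟩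
    · rw [statePath_of_eq_y hℓ rfl, statePath_of_eq_y hℓ rfl]
      simp only [ne_eq, GVert.y.injEq, Fin.mk.injEq, true_and, Function.update_self]
      omega
    · intro ℓ' _ _
      by_cases h : ℓ' = ℓ
      · rw [h, Function.update_self, heq]
      · rw [off_level ℓ' h]
    · intro ℓ' _ hd'
      rw [off_level ℓ' (fun h => hd (Fin.ext (by simp only; omega)))]

variable (k) in
def StateReconfIn (n : ℕ) (c c' : ℕ → ℕ × ℕ) : Prop :=
  ReconfIn (Gk k) GVert.s GVert.t (2 * k + 1) n (statePath k c) (statePath k c')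

theorem stateReconfIn_update (hc : IsState k c) (hℓ : ℓ < k) {v : ℕ × ℕ}
    (hcv : IsState k (Function.update c ℓ v))
    (hmove : (v.1 ≠ (c ℓ).1 ∧ v.2 = (c ℓ).2) ∨ (v.1 = (c ℓ).1 ∧ v.2 ≠ (c ℓ).2)) :
    StateReconfIn k 1 c (Function.update c ℓ v) := by
  obtain ⟨hx, hy, -, -⟩ := hcv ℓ hℓ
  rw [Function.update_self] at hx hy
  exact .single (isShortestSTPath_statePath (by omega) hc)
    (isShortestSTPath_statePath (by omega) hcv) (diffOne_statePath_update hc hℓ ⟨hx, hy⟩ hmove)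

/-- The states `x_1 y_1, x_2 y_1, x_2 y_2, …, x_7 y_6` of a single level, in this order. -/
def stair (j : ℕ) : ℕ × ℕ := ((j + 1) / 2, j / 2)

theorem isState_update_stair (hc : IsState k c) {j : ℕ} (hj : j ≤ 11)
    (hup : ℓ + 1 < k → Linked (c (ℓ + 1)).2 ((j + 1) / 2))
    (hdown : 0 < ℓ → Linked (j / 2) (c (ℓ - 1)).1) :
    IsState k (Function.update c ℓ (stair j)) :=
  hc.update (by simp only [stair]; omega) hup hdown

theorem stateReconfIn_stair (hℓ : ℓ < k) {a : ℕ} :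
    ∀ n, (∀ j ≤ n, IsState k (Function.update c ℓ (stair (a + j)))) →
      StateReconfIn k n (Function.update c ℓ (stair a)) (Function.update c ℓ (stair (a + n)))
  | 0, h => .refl (isShortestSTPath_statePath (by omega) (h 0 le_rfl))
  | n + 1, h => by
    refine (stateReconfIn_stair hℓ n fun j hj => h j (by omega)).trans ?_
    have step := stateReconfIn_update (h n (by omega)) hℓ (v := stair (a + (n + 1)))
    rw [Function.update_idem, Function.update_self] at step
    exact step (h (n + 1) le_rfl) (by simp only [stair]; omega)

theorem stateReconfIn_stair_of_linked (hc : IsState k c) (hℓ : ℓ < k) {a n : ℕ}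
    (han : a + n ≤ 11) (hup : ℓ + 1 < k → ∀ i, Linked (c (ℓ + 1)).2 i)
    (hdown : 0 < ℓ → ∀ j, a ≤ j → j ≤ a + n → Linked (j / 2) (c (ℓ - 1)).1) :
    StateReconfIn k n (Function.update c ℓ (stair a)) (Function.update c ℓ (stair (a + n))) :=
  stateReconfIn_stair hℓ n fun j hj =>
    isState_update_stair hc (by omega) (fun h => hup h _) (fun h => hdown h _ (by omega) (by omega))

end Moves

section Recursion

variable {k : ℕ}

theorem linked_of_even {i : ℕ} (hi : i = 0 ∨ i = 2 ∨ i = 4) (j : ℕ) : Linked i j := by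
  unfold Linked
  omega

theorem stateReconfIn_level (m : ℕ) (hm : m < k) (c : ℕ → ℕ × ℕ) (hc : IsState k c)
    (hzero : ∀ ℓ ≤ m, c ℓ = (0, 0)) (hfree : m + 1 < k → ∀ j, Linked (c (m + 1)).2 j) :
    StateReconfIn k (11 * (2 ^ (m + 1) - 1)) c (Function.update c m (6, 5)) := by
  induction m generalizing c with
  | zero =>
    have climb := stateReconfIn_stair_of_linked (a := 0) (n := 11) hc hm le_rfl hfree
      (fun h => absurd h (lt_irrefl 0))
    rwa [Function.update_eq_self_iff.mpr (hzero 0 le_rfl).symm] at climb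
  | succ m ih =>
    have hcm : c m = (0, 0) := hzero m (by omega)
    have hc' : IsState k (Function.update c m (6, 5)) :=
      hc.update (by omega)
        (fun _ => by rw [hzero (m + 1) le_rfl]; exact linked_of_even (by omega) _)
        (fun _ => by rw [hzero (m - 1) (by omega)]; unfold Linked; omega)
    have recurse (j : ℕ) (hj : j = 5 ∨ j = 9) :
        StateReconfIn k (11 * (2 ^ (m + 1) - 1)) (Function.update c (m + 1) (stair j))
          (Function.update (Function.update c m (6, 5)) (m + 1) (stair j)) := by
      rw [← Function.update_comm (show m + 1 ≠ m by omega)]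
      refine ih (by omega) _ ?_ ?_ ?_
      · exact isState_update_stair hc (by omega) (fun h => hfree h _)
          (fun _ => by rw [Nat.add_sub_cancel, hcm]; unfold Linked; omega)
      · intro ℓ hℓ
        rw [Function.update_of_ne (by omega)]
        exact hzero ℓ (by omega)
      · intro _
        rw [Function.update_self]
        exact linked_of_even (by simp only [stair]; omega)
    have to_x4y3 := stateReconfIn_stair_of_linked (a := 0) (n := 5) hc hm (by omega) hfree
      (fun _ j _ _ => by rw [Nat.add_sub_cancel, hcm]; unfold Linked; omega)
    have x4y3_to_x6y5 := stateReconfIn_stair_of_linked (a := 5) (n := 4) hc' hm (by omega)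
      (by rwa [Function.update_of_ne (show m + 1 + 1 ≠ m by omega)])
      (fun _ j _ _ => by rw [Nat.add_sub_cancel, Function.update_self]; unfold Linked; omega)
    have x6y5_to_x7y6 := stateReconfIn_stair_of_linked (a := 9) (n := 2) hc hm (by omega) hfree
      (fun _ j _ _ => by rw [Nat.add_sub_cancel, hcm]; unfold Linked; omega)
    rw [Function.update_eq_self_iff.mpr (hzero (m + 1) le_rfl).symm] at to_x4y3
    have hlen : 5 + 11 * (2 ^ (m + 1) - 1) + 4 + 11 * (2 ^ (m + 1) - 1) + 2 =
        11 * (2 ^ (m + 1 + 1) - 1) := by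
      rw [pow_succ]
      have := Nat.one_le_two_pow (n := m + 1)
      omega
    exact hlen ▸ ((((to_x4y3.trans (recurse 5 (by omega))).trans x4y3_to_x6y5).trans
      (recurse 9 (by omega)).symm).trans x6y5_to_x7y6)

end Recursion

/-- the reconfiguration distance in `G^k` between `p^k_b` and `p^k_e` is at
most `11(2^k - 1)`: there is a reconfiguration sequence from `p^k_b` to `p^k_e` of length
at most `11(2^k - 1)`. -/
theorem stmt1 (k : ℕ) (hk : 1 ≤ k) :
    ∃ ℓ ≤ 11 * (2 ^ k - 1), ∃ ρ : ℕ → (Fin (2 * k + 1 + 1) → GVert k),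
      SPReconfSeq (Gk k) GVert.s GVert.t (2 * k + 1) ρ ℓ (pbG k) (peG k hk) := by
  have hzero : IsState k (fun _ => (0, 0)) := fun _ _ => by simp [Linked]
  have h := stateReconfIn_level (k - 1) (by omega) _ hzero (fun _ _ => rfl) (by omega)
  rw [Nat.sub_add_cancel hk] at h
  rw [pbG_eq_statePath, peG_eq_statePath]
  exact ⟨_, le_rfl, h⟩
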